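/- arXiv:2502.01030 — 8 statements merged into one kernel-verified Lean document; each statement's English description precedes it below -/
import Mathlib

section
/- If F is a finite field with |F| > 3, then SL(2,F) is perfect, i.e., equals its own commutator subgroup. -/
theorem exists_ne_zero_sq_ne_one {R : Type*} [Ring R] [NoZeroDivisors R] [Fintype R]
    (h : 3 < Fintype.card R) : ∃ a : R, a ≠ 0 ∧ a ^ 2 ≠ 1 := by
  classical
  have hcard : ({0, 1, -1} : Finset R).card < Finset.univ.card :=
    Finset.card_le_three.trans_lt (h.trans_eq Finset.card_univ.symm)
  obtain ⟨a, -, ha⟩ := Finset.exists_mem_notMem_of_card_lt_card hcard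
  simp only [Finset.mem_insert, Finset.mem_singleton, not_or] at ha
  exact ⟨a, ha.1, sq_ne_one_iff.mpr ha.2⟩

/-- If `F` is a finite field with `|F| > 3`, then `SL(2,F)` is perfect. -/
theorem stmt2 (F : Type*) [Field F] [Fintype F] (h : 3 < Fintype.card F) :
    commutator (Matrix.SpecialLinearGroup (Fin 2) F) = ⊤ := by
  obtain ⟨a, ha, hasq⟩ := exists_ne_zero_sq_ne_one h
  -- `⁅diag(a, a⁻¹), transvection b⁆ = transvection ((a ^ 2 - 1) * b)`, and transvections generate `SL(2, F)`.
  exact Matrix.SL2.commutator_eq_top ha hasq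
end

section
/- If F is a finite field with |F| > 2, then the commutator subgroup of GL(2,F) equals SL(2,F). -/
/-!
The determinant kills commutators because `Fˣ` is abelian. Conversely, `SL(2,F)` is generated
by transvections `T(b) = 1 + b E_ij`, and for `a ∉ {0, 1}` the dilation `D = diag(…, a, …)`
(with `a` in row `i`) satisfies `D T(b) D⁻¹ = T(ab)`, so `⁅D, T(b)⁆ = T((a - 1) b)`: every
transvection is a commutator in `GL(2,F)`.
-/

open Matrix Matrix.SpecialLinearGroup
open scoped commutatorElement MatrixGroups

lemma exists_ne_zero_ne_one_of_two_lt_card {α : Type*} [Zero α] [One α] [Fintype α]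
    (h : 2 < Fintype.card α) : ∃ a : α, a ≠ 0 ∧ a ≠ 1 := by
  classical
  obtain ⟨a, -, ha⟩ := Finset.exists_mem_notMem_of_card_lt_card (s := {0, 1})
    (t := Finset.univ) (Finset.card_le_two.trans_lt h)
  exact ⟨a, by simpa [not_or] using ha⟩

namespace Matrix.GeneralLinearGroup

variable {n F : Type*} [Fintype n] [DecidableEq n] [Field F]

def dilation (i : n) {a : F} (ha : a ≠ 0) : GL n F :=
  mkOfDetNeZero (diagonal (Function.update 1 i a)) (by
    simp [det_diagonal, Finset.prod_update_of_mem, ha])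

lemma dilation_mul_toGL_transvection {i j : n} (hij : i ≠ j) {a : F} (ha : a ≠ 0) (b : F) :
    dilation i ha * toGL (SpecialLinearGroup.transvection hij b) =
      toGL (SpecialLinearGroup.transvection hij (a * b)) * dilation i ha := by
  ext k l
  simp [dilation, transvection_coe, one_apply, single_apply, Function.update_apply]
  grind

lemma commutator_dilation_toGL_transvection {i j : n} (hij : i ≠ j) {a : F} (ha : a ≠ 0)
    (b : F) : ⁅dilation i ha, toGL (SpecialLinearGroup.transvection hij b)⁆ =
      toGL (SpecialLinearGroup.transvection hij ((a - 1) * b)) := by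
  rw [commutatorElement_def, dilation_mul_toGL_transvection, mul_inv_cancel_right, ← map_inv,
    ← map_mul, transvection_inv, ← transvection_add, sub_one_mul, sub_eq_add_neg]

lemma toGL_transvection_mem_commutator {a : F} (ha₀ : a ≠ 0) (ha₁ : a ≠ 1) {i j : n}
    (hij : i ≠ j) (c : F) :
    toGL (SpecialLinearGroup.transvection hij c) ∈ commutator (GL n F) := by
  rw [← div_mul_cancel₀ c (sub_ne_zero_of_ne ha₁), mul_comm,
    ← commutator_dilation_toGL_transvection hij ha₀]
  exact Subgroup.commutator_mem_commutator (Subgroup.mem_top _) (Subgroup.mem_top _)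

theorem commutator_fin_two_eq_ker_det {a : F} (ha₀ : a ≠ 0) (ha₁ : a ≠ 1) :
    commutator (GL (Fin 2) F) = (det : GL (Fin 2) F →* Fˣ).ker := by
  refine le_antisymm (Abelianization.commutator_subset_ker _) fun g hg => ?_
  obtain ⟨s, rfl⟩ : g ∈ Set.range toGL := by rwa [range_toGL]
  clear hg
  induction s using SL2.transvection_induction with
  | htransvec i j hij c => exact toGL_transvection_mem_commutator ha₀ ha₁ hij c
  | hmul A B hA hB => rw [map_mul]; exact mul_mem hA hB

end Matrix.GeneralLinearGroup

/-- If `F` is a finite field with `|F| > 2`, then the commutator subgroup of `GL(2,F)`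
is `SL(2,F)`, i.e. the kernel of the determinant map. -/
theorem stmt3 (F : Type*) [Field F] [Fintype F] (h : 2 < Fintype.card F) :
    commutator (GL (Fin 2) F) = (Matrix.GeneralLinearGroup.det :
      GL (Fin 2) F →* Fˣ).ker := by
  obtain ⟨a, ha₀, ha₁⟩ := exists_ne_zero_ne_one_of_two_lt_card h
  exact GeneralLinearGroup.commutator_fin_two_eq_ker_det ha₀ ha₁
end

section
/- Let F be a finite field with |F| > 2. Any additive subgroup of M_2(F) (2×2 matrices) that is invariant under conjugation by GL(2,F) either contains all trace-zero matrices sl_2(F) or consists only of scalar matrices. -/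
/-- Let `F` be a finite field with `|F| > 2`.  Any additive subgroup of `M₂(F)` invariant
under conjugation by `GL(2,F)` either contains all trace-zero matrices or consists only of
scalar matrices. -/
theorem stmt4 (F : Type*) [Field F] [Fintype F] (h : 2 < Fintype.card F)
    (M : AddSubgroup (Matrix (Fin 2) (Fin 2) F))
    (hconj : ∀ g : GL (Fin 2) F, ∀ x ∈ M,
      (g : Matrix (Fin 2) (Fin 2) F) * x * ((g⁻¹ : GL (Fin 2) F) : Matrix (Fin 2) (Fin 2) F) ∈ M) :
    (∀ x : Matrix (Fin 2) (Fin 2) F, x.trace = 0 → x ∈ M) ∨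
      (∀ x ∈ M, ∃ c : F, x = c • (1 : Matrix (Fin 2) (Fin 2) F)) := by
  classical
  by_cases hsc : ∀ x ∈ M, ∃ c : F, x = c • (1 : Matrix (Fin 2) (Fin 2) F)
  · exact Or.inr hsc
  left
  push_neg at hsc
  obtain ⟨x, hxM, hxns⟩ := hsc
  have conj : ∀ A B y : Matrix (Fin 2) (Fin 2) F, A * B = 1 → B * A = 1 → y ∈ M →
      A * y * B ∈ M := fun A B y h1 h2 hy => hconj ⟨A, B, h1, h2⟩ y hy
  have choose2 : ∀ v : F, ∃ u : F, u ≠ 0 ∧ u ≠ v := by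
    intro v
    by_contra hcon
    push_neg at hcon
    have hsub : (Finset.univ : Finset F) ⊆ {0, v} := by
      intro u _
      rcases eq_or_ne u 0 with h0 | h0
      · simp [h0]
      · simp [hcon u h0]
    have hle := Finset.card_le_card hsub
    have h2 : ({0, v} : Finset F).card ≤ 2 :=
      (Finset.card_insert_le _ _).trans (by simp)
    rw [Finset.card_univ] at hle
    omega
  set a := x 0 0 with ha
  set b := x 0 1 with hb
  set c := x 1 0 with hc
  set d := x 1 1 with hd
  have hx : x = !![a, b; c, d] := Matrix.eta_fin_two x
  have trans : ∀ u : F, !![u*c, u*(d-a)-u*u*c; 0, -(u*c)] ∈ M := by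
    intro u
    have h1 : (!![1,u;0,1] : Matrix (Fin 2) (Fin 2) F) * !![1,-u;0,1] = 1 := by
      ext i j; fin_cases i <;> fin_cases j <;>
        simp [Matrix.mul_apply, Fin.sum_univ_two, Matrix.one_apply]
    have h2 : (!![1,-u;0,1] : Matrix (Fin 2) (Fin 2) F) * !![1,u;0,1] = 1 := by
      ext i j; fin_cases i <;> fin_cases j <;>
        simp [Matrix.mul_apply, Fin.sum_univ_two, Matrix.one_apply]
    have hcj := conj _ _ _ h1 h2 hxM
    have hsub := M.sub_mem hcj hxM
    rwa [show !![1,u;0,1] * x * !![1,-u;0,1] - x = !![u*c, u*(d-a)-u*u*c; 0, -(u*c)] from by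
      rw [hx]
      ext i j; fin_cases i <;> fin_cases j <;>
        simp [Matrix.mul_apply, Fin.sum_univ_two, Matrix.sub_apply] <;> ring] at hsub
  -- obtain an upper triangular element with nonzero (0,1) entry
  have key : ∃ p q r : F, q ≠ 0 ∧ !![p, q; 0, r] ∈ M := by
    rcases eq_or_ne c 0 with hc0 | hc0
    · rcases eq_or_ne b 0 with hb0 | hb0
      · have had : d - a ≠ 0 := by
          intro hda
          refine hxns a ?_
          rw [hx, hc0, hb0, show d = a from by linear_combination hda]
          ext i j; fin_cases i <;> fin_cases j <;> simp [Matrix.smul_apply, Matrix.one_apply]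
        refine ⟨0, d - a, 0, had, ?_⟩
        have := trans 1
        rwa [show (1:F)*c = 0 from by rw [hc0]; ring,
          show (1:F)*(d-a)-1*1*c = d - a from by rw [hc0]; ring, neg_zero] at this
      · refine ⟨a, b, d, hb0, ?_⟩
        rw [hx, hc0] at hxM; exact hxM
    · obtain ⟨u, hu0, huv⟩ := choose2 ((d-a)/c)
      have h1 : (d-a) - u*c ≠ 0 := by
        intro hh
        exact huv (by rw [eq_div_iff hc0]; linear_combination -hh)
      refine ⟨u*c, u*(d-a)-u*u*c, -(u*c), ?_, trans u⟩
      intro hq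
      exact mul_ne_zero hu0 h1 (by linear_combination hq)
  obtain ⟨p, q, r, hq, hpqr⟩ := key
  obtain ⟨t, ht0, ht1⟩ := choose2 1
  have e12s : ∃ s : F, s ≠ 0 ∧ !![0,s;0,0] ∈ M := by
    refine ⟨(t-1)*q, mul_ne_zero (sub_ne_zero.mpr ht1) hq, ?_⟩
    have h1 : (!![t,0;0,1] : Matrix (Fin 2) (Fin 2) F) * !![t⁻¹,0;0,1] = 1 := by
      ext i j; fin_cases i <;> fin_cases j <;>
        simp [Matrix.mul_apply, Fin.sum_univ_two, Matrix.one_apply, mul_inv_cancel₀ ht0]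
    have h2 : (!![t⁻¹,0;0,1] : Matrix (Fin 2) (Fin 2) F) * !![t,0;0,1] = 1 := by
      ext i j; fin_cases i <;> fin_cases j <;>
        simp [Matrix.mul_apply, Fin.sum_univ_two, Matrix.one_apply, inv_mul_cancel₀ ht0]
    have hcj := conj _ _ _ h1 h2 hpqr
    have hcj2 : !![p, t*q; 0, r] ∈ M := by
      rwa [show !![t,0;0,1] * !![p,q;0,r] * !![t⁻¹,0;0,1] = !![p, t*q; 0, r] from by
        ext i j; fin_cases i <;> fin_cases j <;>
          simp [Matrix.mul_apply, Fin.sum_univ_two] <;>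
          field_simp <;> ring] at hcj
    have hsub := M.sub_mem hcj2 hpqr
    rwa [show !![p,t*q;0,r] - !![p,q;0,r] = !![0,(t-1)*q;0,0] from by
      ext i j; fin_cases i <;> fin_cases j <;> simp [Matrix.sub_apply] <;> ring] at hsub
  obtain ⟨s, hs0, hsM⟩ := e12s
  have e12 : ∀ w : F, !![0,w;0,0] ∈ M := by
    intro w
    rcases eq_or_ne w 0 with h0 | h0
    · have := M.zero_mem
      rwa [show (0 : Matrix (Fin 2) (Fin 2) F) = !![0,w;0,0] from by
        rw [h0]; ext i j; fin_cases i <;> fin_cases j <;> simp] at this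
    · have h1 : (!![w/s,0;0,1] : Matrix (Fin 2) (Fin 2) F) * !![s/w,0;0,1] = 1 := by
        ext i j; fin_cases i <;> fin_cases j <;>
          simp [Matrix.mul_apply, Fin.sum_univ_two, Matrix.one_apply] <;> field_simp
      have h2 : (!![s/w,0;0,1] : Matrix (Fin 2) (Fin 2) F) * !![w/s,0;0,1] = 1 := by
        ext i j; fin_cases i <;> fin_cases j <;>
          simp [Matrix.mul_apply, Fin.sum_univ_two, Matrix.one_apply] <;> field_simp
      have hcj := conj _ _ _ h1 h2 hsM
      rwa [show !![w/s,0;0,1] * !![0,s;0,0] * !![s/w,0;0,1] = !![0,w;0,0] from by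
        ext i j; fin_cases i <;> fin_cases j <;>
          simp [Matrix.mul_apply, Fin.sum_univ_two] <;> field_simp] at hcj
  have e21 : ∀ w : F, !![0,0;w,0] ∈ M := by
    intro w
    have h1 : (!![0,1;1,0] : Matrix (Fin 2) (Fin 2) F) * !![0,1;1,0] = 1 := by
      ext i j; fin_cases i <;> fin_cases j <;>
        simp [Matrix.mul_apply, Fin.sum_univ_two, Matrix.one_apply]
    have hcj := conj _ _ _ h1 h1 (e12 w)
    rwa [show !![0,1;1,0] * !![0,w;0,0] * !![0,1;1,0] = !![0,0;w,0] from by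
      ext i j; fin_cases i <;> fin_cases j <;>
        simp [Matrix.mul_apply, Fin.sum_univ_two]] at hcj
  have dg : ∀ w : F, !![w,0;0,-w] ∈ M := by
    intro w
    have h1 : (!![1,0;1,1] : Matrix (Fin 2) (Fin 2) F) * !![1,0;-1,1] = 1 := by
      ext i j; fin_cases i <;> fin_cases j <;>
        simp [Matrix.mul_apply, Fin.sum_univ_two, Matrix.one_apply]
    have h2 : (!![1,0;-1,1] : Matrix (Fin 2) (Fin 2) F) * !![1,0;1,1] = 1 := by
      ext i j; fin_cases i <;> fin_cases j <;>
        simp [Matrix.mul_apply, Fin.sum_univ_two, Matrix.one_apply]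
    have hcj := conj _ _ _ h1 h2 (e12 (-w))
    have hcj2 : !![w,-w;w,-w] ∈ M := by
      rwa [show !![1,0;1,1] * !![0,-w;0,0] * !![1,0;-1,1] = !![w,-w;w,-w] from by
        ext i j; fin_cases i <;> fin_cases j <;>
          simp [Matrix.mul_apply, Fin.sum_univ_two] <;> ring] at hcj
    have hadd := M.add_mem (M.add_mem hcj2 (e12 w)) (e21 (-w))
    rwa [show !![w,-w;w,-w] + !![0,w;0,0] + !![0,0;-w,0] = !![w,0;0,-w] from by
      ext i j; fin_cases i <;> fin_cases j <;> simp [Matrix.add_apply] <;> ring] at hadd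
  intro z hz
  rw [Matrix.trace_fin_two] at hz
  have h11 : z 1 1 = -(z 0 0) := by linear_combination hz
  have hadd := M.add_mem (M.add_mem (dg (z 0 0)) (e12 (z 0 1))) (e21 (z 1 0))
  rwa [show !![z 0 0,0;0,-(z 0 0)] + !![0,z 0 1;0,0] + !![0,0;z 1 0,0] = z from by
    ext i j; fin_cases i <;> fin_cases j <;> simp [Matrix.add_apply, h11]] at hadd
end

section
/- Let R = F[[π]] be the power series ring over a finite field F with |F| > 2. Then the commutator subgroup of GL(2,R) is SL(2,R). -/
/-!
Let `R` be a local ring containing a unit `v` with `v - 1` also a unit (for `F[[π]]`, a constant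
`v ∈ F \ {0, 1}`). Then `⁅diag(v, 1), E₁₂(s)⁆ = E₁₂((v - 1) s)`, so every elementary matrix
`E₁₂(t)` is a commutator, and so is every `E₂₁(t)`, a conjugate of one. A determinant-one matrix
`!![a, b; c, d]` with `c` a unit equals `E₁₂((a - 1)/c) E₂₁(c) E₁₂((d - 1)/c)`. Since `R` is local,
`a` or `c` is a unit, and if `c` is not, the lower-left entry `a + c` of `E₂₁(1) g` is.
-/

open Matrix
open scoped commutatorElement

lemma IsLocalRing.isUnit_add_of_not_isUnit {R : Type*} [CommRing R] [IsLocalRing R] {a b : R}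
    (ha : IsUnit a) (hb : ¬IsUnit b) : IsUnit (a + b) := by
  have : IsUnit ((a + b) + -b) := by simpa using ha
  simpa [IsUnit.neg_iff, hb] using IsLocalRing.isUnit_or_isUnit_of_isUnit_add this

lemma isUnit_apply_zero_zero_or_isUnit_apply_one_zero {R : Type*} [CommRing R] [IsLocalRing R]
    {A : Matrix (Fin 2) (Fin 2) R} (h : IsUnit A.det) : IsUnit (A 0 0) ∨ IsUnit (A 1 0) := by
  rw [det_fin_two, sub_eq_add_neg, ← neg_mul] at h
  exact (IsLocalRing.isUnit_or_isUnit_of_isUnit_add h).imp isUnit_of_mul_isUnit_left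
    isUnit_of_mul_isUnit_right

namespace GL2

variable {R : Type*} [CommRing R]

def upper (t : R) : GL (Fin 2) R :=
  ⟨!![1, t; 0, 1], !![1, -t; 0, 1],
    by simp [one_fin_two], by simp [one_fin_two]⟩

def lower (t : R) : GL (Fin 2) R :=
  ⟨!![1, 0; t, 1], !![1, 0; -t, 1],
    by simp [one_fin_two], by simp [one_fin_two]⟩

def swap : GL (Fin 2) R :=
  ⟨!![0, 1; 1, 0], !![0, 1; 1, 0],
    by simp [one_fin_two], by simp [one_fin_two]⟩

def diagLeft (v : Rˣ) : GL (Fin 2) R :=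
  ⟨!![(v : R), 0; 0, 1], !![((v⁻¹ : Rˣ) : R), 0; 0, 1],
    by simp [one_fin_two], by simp [one_fin_two]⟩

lemma lower_eq_swap_mul_upper_mul_swap_inv (t : R) : lower t = swap * upper t * swap⁻¹ := by
  ext i j
  fin_cases i <;> fin_cases j <;> simp [lower, upper, swap]

lemma commutatorElement_diagLeft_upper (v : Rˣ) (s : R) :
    ⁅diagLeft v, upper s⁆ = upper (((v : R) - 1) * s) := by
  ext i j
  fin_cases i <;> fin_cases j <;> simp [commutatorElement_def, diagLeft, upper]
  ring

lemma upper_mem_commutator {v : Rˣ} (hv : IsUnit ((v : R) - 1)) (t : R) :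
    upper t ∈ commutator (GL (Fin 2) R) := by
  obtain ⟨w, hw⟩ := hv
  have : upper t = ⁅diagLeft v, upper (((w⁻¹ : Rˣ) : R) * t)⁆ := by
    rw [commutatorElement_diagLeft_upper, ← hw, ← mul_assoc, w.mul_inv, one_mul]
  rw [this]
  exact Subgroup.commutator_mem_commutator (Subgroup.mem_top _) (Subgroup.mem_top _)

lemma lower_mem_commutator {v : Rˣ} (hv : IsUnit ((v : R) - 1)) (t : R) :
    lower t ∈ commutator (GL (Fin 2) R) := by
  rw [lower_eq_swap_mul_upper_mul_swap_inv]
  exact Subgroup.Normal.conj_mem inferInstance _ (upper_mem_commutator hv t) _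

lemma eq_upper_mul_lower_mul_upper (g : GL (Fin 2) R)
    (hdet : (g : Matrix (Fin 2) (Fin 2) R).det = 1) (c : Rˣ) (hc : (g : Matrix (Fin 2) (Fin 2) R) 1 0 = c) :
    g = upper ((g.val 0 0 - 1) * c⁻¹) * lower (c : R) * upper ((g.val 1 1 - 1) * c⁻¹) := by
  have hcc : ((c⁻¹ : Rˣ) : R) * c = 1 := c.inv_mul
  rw [det_fin_two, hc] at hdet
  ext i j
  fin_cases i <;> fin_cases j <;> simp [upper, lower, hc]
  · linear_combination (-((c⁻¹ : Rˣ) : R)) * hdet - g.val 0 1 * hcc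
  · linear_combination (1 - g.val 1 1) * hcc

lemma mem_commutator_of_det_eq_one_of_isUnit {v : Rˣ} (hv : IsUnit ((v : R) - 1))
    {g : GL (Fin 2) R} (hdet : (g : Matrix (Fin 2) (Fin 2) R).det = 1)
    (hc : IsUnit ((g : Matrix (Fin 2) (Fin 2) R) 1 0)) : g ∈ commutator (GL (Fin 2) R) := by
  obtain ⟨c, hc⟩ := hc
  rw [eq_upper_mul_lower_mul_upper g hdet c hc.symm]
  exact mul_mem (mul_mem (upper_mem_commutator hv _) (lower_mem_commutator hv _))
    (upper_mem_commutator hv _)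

variable [IsLocalRing R]

lemma mem_commutator_of_det_eq_one {v : Rˣ} (hv : IsUnit ((v : R) - 1)) {g : GL (Fin 2) R}
    (hdet : (g : Matrix (Fin 2) (Fin 2) R).det = 1) : g ∈ commutator (GL (Fin 2) R) := by
  by_cases hc : IsUnit ((g : Matrix (Fin 2) (Fin 2) R) 1 0)
  · exact mem_commutator_of_det_eq_one_of_isUnit hv hdet hc
  have ha : IsUnit ((g : Matrix (Fin 2) (Fin 2) R) 0 0) :=
    (isUnit_apply_zero_zero_or_isUnit_apply_one_zero (hdet ▸ isUnit_one)).resolve_right hc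
  have hdet' : ((lower 1 * g : GL (Fin 2) R) : Matrix (Fin 2) (Fin 2) R).det = 1 := by
    rw [Units.val_mul, det_mul, hdet]
    simp [lower]
  have hc' : IsUnit (((lower 1 * g : GL (Fin 2) R) : Matrix (Fin 2) (Fin 2) R) 1 0) := by
    simpa [lower, mul_apply, Fin.sum_univ_two] using IsLocalRing.isUnit_add_of_not_isUnit ha hc
  exact (Subgroup.mul_mem_cancel_left _ (lower_mem_commutator hv 1)).mp
    (mem_commutator_of_det_eq_one_of_isUnit hv hdet' hc')

theorem commutator_eq_ker_det {v : R} (hv : IsUnit v) (hv₁ : IsUnit (v - 1)) :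
    commutator (GL (Fin 2) R) = GeneralLinearGroup.det.ker := by
  obtain ⟨v, rfl⟩ := hv
  refine le_antisymm (Abelianization.commutator_subset_ker _) fun g hg ↦ ?_
  refine mem_commutator_of_det_eq_one hv₁ ?_
  rw [← GeneralLinearGroup.val_det_apply, MonoidHom.mem_ker.mp hg, Units.val_one]

end GL2

/-- For `R = F[[π]]` with `F` finite, `|F| > 2`, the commutator subgroup of `GL(2,R)`
is `SL(2,R)`, i.e. the kernel of the determinant. -/
theorem stmt9 (F : Type*) [Field F] [Fintype F] (h : 2 < Fintype.card F) :
    commutator (GL (Fin 2) (PowerSeries F)) =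
      (Matrix.GeneralLinearGroup.det :
        GL (Fin 2) (PowerSeries F) →* (PowerSeries F)ˣ).ker := by
  classical
  obtain ⟨u, -, hu⟩ : ∃ u ∈ Finset.univ, u ∉ ({0, 1} : Finset F) :=
    Finset.exists_mem_notMem_of_card_lt_card (Finset.card_le_two.trans_lt h)
  rw [Finset.mem_insert, Finset.mem_singleton, not_or] at hu
  refine GL2.commutator_eq_ker_det ((Ne.isUnit hu.1).map PowerSeries.C) ?_
  rw [← map_one PowerSeries.C, ← map_sub]
  exact (Ne.isUnit (sub_ne_zero.mpr hu.2)).map PowerSeries.C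
end

section
/- Let R = F[[π]] with F the field of 2 elements and maximal ideal p = (π). The commutator subgroup of GL(2,R) is the set of B in SL(2,R) whose reduction modulo p lies in the commutator subgroup of GL(2,F); in particular, the commutator subgroup of GL(2,R) has index 2 in SL(2,R). -/
/-!
A matrix of determinant one over `R⟦X⟧` that is congruent to `1` modulo `X` factors as a lower
unipotent matrix, times `diag(a, a⁻¹)`, times an upper unipotent matrix, with
off-diagonal entries divisible by `X`. Each factor is a commutator: `diag(a, a⁻¹) = ⁅diag(a, 1), w⁆` for the
swap `w`, the upper unipotent matrix with entry `X * x = ((1 + X) - 1) * x` is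
`⁅diag(1 + X, 1), [1, x; 0, 1]⁆`, and the lower one is its conjugate by `w`. Since the constant
matrices split the reduction map `GL(2, R⟦X⟧) → GL(2, R)`, this identifies the commutator
subgroup of `GL(2, R⟦X⟧)`.

For `R = F₂` every matrix has determinant one, and `GL(2, F₂)` permutes the four vectors of
`F₂²`, with `w` acting as a transposition. The sign of this action has a kernel of order `3`
containing the commutator subgroup, which is nontrivial, hence equal to it.
-/

open Matrix Subgroup
open scoped commutatorElement PowerSeries
open PowerSeries (constantCoeff)

theorem commutatorElement_eq_iff_mul_eq {G : Type*} [Group G] {g h k : G} :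
    ⁅g, h⁆ = k ↔ g * h = k * h * g := by
  rw [commutatorElement_def, mul_inv_eq_iff_eq_mul, mul_inv_eq_iff_eq_mul]

theorem Subgroup.map_commutator_le {G H : Type*} [Group G] [Group H] (f : G →* H) :
    (_root_.commutator G).map f ≤ _root_.commutator H := by
  rw [map_commutator_eq]
  exact commutator_mono le_top le_top

theorem FiniteField.eq_zero_or_eq_one_of_card_eq_two {F : Type*} [Field F] [Fintype F]
    (hF : Fintype.card F = 2) (x : F) : x = 0 ∨ x = 1 := by
  have h := FiniteField.pow_card x
  rw [hF, pow_two, mul_left_eq_self₀] at h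
  exact h.symm

lemma Matrix.swap_fin_two {R : Type*} [Zero R] [One R] :
    Matrix.swap R (0 : Fin 2) 1 = !![0, 1; 1, 0] := by
  ext i j
  fin_cases i <;> fin_cases j <;> simp [Matrix.swap, Equiv.Perm.permMatrix, PEquiv.toMatrix_apply]

namespace Matrix.GeneralLinearGroup

section CommRing

variable {R : Type*} [CommRing R]

def diagUnits (a b : Rˣ) : GL (Fin 2) R :=
  ⟨!![a, 0; 0, b], !![↑a⁻¹, 0; 0, ↑b⁻¹], by simp [one_fin_two], by simp [one_fin_two]⟩

@[simp]
lemma val_diagUnits (a b : Rˣ) : (diagUnits a b).val = !![(a : R), 0; 0, b] := rfl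

lemma swap_inv : (swap R (0 : Fin 2) 1)⁻¹ = swap R 0 1 := by
  rw [inv_eq_iff_mul_eq_one]
  ext : 1
  exact swap_mul_self 0 1

lemma commutatorElement_diagUnits_upperRightHom (u : Rˣ) (x : R) :
    ⁅diagUnits u 1, upperRightHom x⁆ = upperRightHom ((u - 1) * x) := by
  rw [commutatorElement_eq_iff_mul_eq]
  ext i j
  fin_cases i <;> fin_cases j <;> simp
  ring

lemma commutatorElement_diagUnits_swap (u : Rˣ) :
    ⁅diagUnits u 1, swap R 0 1⁆ = diagUnits u u⁻¹ := by
  rw [commutatorElement_eq_iff_mul_eq]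
  ext i j
  fin_cases i <;> fin_cases j <;> simp [swap_fin_two]

lemma diagUnits_mem_commutator (u : Rˣ) : diagUnits u u⁻¹ ∈ commutator (GL (Fin 2) R) :=
  commutatorElement_diagUnits_swap u ▸ commutator_mem_commutator (mem_top _) (mem_top _)

lemma commutator_ne_bot [Nontrivial R] : commutator (GL (Fin 2) R) ≠ ⊥ := by
  rw [Ne, commutator_eq_bot_iff_center_eq_top, eq_top_iff]
  intro h
  have := mem_center_iff.1 (h (mem_top (swap R 0 1))) (upperRightHom 1)
  simpa [swap_fin_two] using congrArg (fun g : GL (Fin 2) R => g 0 0) this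

lemma eq_swap_mul_upperRightHom_mul_swap_mul_diagUnits_mul_upperRightHom
    (z : GL (Fin 2) R) (hdet : det z = 1) (a : Rˣ) (ha : (a : R) = z 0 0) :
    z = swap R 0 1 * upperRightHom (z 1 0 * ↑a⁻¹) * swap R 0 1 * diagUnits a a⁻¹ *
      upperRightHom (↑a⁻¹ * z 0 1) := by
  have hd : z 1 1 * a = z 1 0 * z 0 1 + 1 := by
    have := congrArg Units.val hdet
    rw [val_det_apply, det_fin_two, ← ha, Units.val_one] at this
    linear_combination this
  ext i j
  fin_cases i <;> fin_cases j <;> simp [swap_fin_two]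
  · exact ha.symm
  · linear_combination ((a⁻¹ : Rˣ) : R) * hd - z 1 1 * a.mul_inv

lemma upperRightHom_mem_commutator_of_constantCoeff_eq_zero {y : R⟦X⟧}
    (hy : constantCoeff y = 0) : upperRightHom y ∈ commutator (GL (Fin 2) R⟦X⟧) := by
  obtain ⟨x, rfl⟩ := PowerSeries.X_dvd_iff.2 hy
  have hu : IsUnit (1 + PowerSeries.X : R⟦X⟧) :=
    PowerSeries.isUnit_iff_constantCoeff.2 (by simp)
  have hcomm : upperRightHom (PowerSeries.X * x) = ⁅diagUnits hu.unit 1, upperRightHom x⁆ := by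
    rw [commutatorElement_diagUnits_upperRightHom, hu.unit_spec, add_sub_cancel_left]
  exact hcomm ▸ commutator_mem_commutator (mem_top _) (mem_top _)

lemma mem_commutator_of_det_eq_one_of_map_eq_one (z : GL (Fin 2) R⟦X⟧) (hdet : det z = 1)
    (hred : map (constantCoeff (R := R)) z = 1) : z ∈ commutator (GL (Fin 2) R⟦X⟧) := by
  have hz (i j : Fin 2) : constantCoeff (z i j) = (1 : Matrix (Fin 2) (Fin 2) R) i j :=
    congrArg (fun g : GL (Fin 2) R => g i j) hred
  have hunit : IsUnit (z 0 0) := PowerSeries.isUnit_iff_constantCoeff.2 (by simp [hz])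
  have hlower {y : R⟦X⟧} (hy : constantCoeff y = 0) :
      swap _ 0 1 * upperRightHom y * swap _ 0 1 ∈ commutator (GL (Fin 2) R⟦X⟧) := by
    simpa [swap_inv] using (inferInstance : (commutator (GL (Fin 2) R⟦X⟧)).Normal).conj_mem _
      (upperRightHom_mem_commutator_of_constantCoeff_eq_zero hy) (swap _ 0 1)
  rw [eq_swap_mul_upperRightHom_mul_swap_mul_diagUnits_mul_upperRightHom z hdet hunit.unit
    hunit.unit_spec]
  refine mul_mem (mul_mem (hlower ?_) (diagUnits_mem_commutator _))
    (upperRightHom_mem_commutator_of_constantCoeff_eq_zero ?_) <;> simp [hz]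

variable {n : Type*} [Fintype n] [DecidableEq n]

lemma map_constantCoeff_map_C (g : GL n R) :
    map (constantCoeff (R := R)) (map (PowerSeries.C (R := R)) g) = g := by
  ext i j
  simp

lemma map_constantCoeff_ker_det :
    (det : GL n R⟦X⟧ →* R⟦X⟧ˣ).ker.map (map (constantCoeff (R := R))) =
      (det : GL n R →* Rˣ).ker := by
  apply le_antisymm
  · rintro _ ⟨g, hg, rfl⟩
    rw [MonoidHom.mem_ker, GeneralLinearGroup.map_det, MonoidHom.mem_ker.1 hg, map_one]
  · intro g hg
    refine ⟨map (PowerSeries.C (R := R)) g, ?_, map_constantCoeff_map_C g⟩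
    rw [SetLike.mem_coe, MonoidHom.mem_ker, GeneralLinearGroup.map_det, MonoidHom.mem_ker.1 hg,
      map_one]

theorem commutator_powerSeries_eq_ker_det_inf_comap :
    commutator (GL (Fin 2) R⟦X⟧) =
      (det : GL (Fin 2) R⟦X⟧ →* R⟦X⟧ˣ).ker ⊓
        (commutator (GL (Fin 2) R)).comap (map (constantCoeff (R := R))) := by
  refine le_antisymm (le_inf (Abelianization.commutator_subset_ker _)
    (map_le_iff_le_comap.1 (map_commutator_le _))) ?_
  rintro x ⟨hdet, hred⟩
  set y := map PowerSeries.C (map (constantCoeff (R := R)) x)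
  have hy : y ∈ commutator (GL (Fin 2) R⟦X⟧) := map_commutator_le _ (mem_map_of_mem _ hred)
  have hy_det : det y = 1 :=
    MonoidHom.mem_ker.1 (Abelianization.commutator_subset_ker det hy)
  have hyx : y⁻¹ * x ∈ commutator (GL (Fin 2) R⟦X⟧) := by
    apply mem_commutator_of_det_eq_one_of_map_eq_one
    · rw [map_mul, map_inv, hy_det, MonoidHom.mem_ker.1 hdet, inv_one, one_mul]
    · rw [map_mul, map_inv, map_constantCoeff_map_C, inv_mul_cancel]
  simpa using mul_mem hy hyx

theorem relIndex_commutator_powerSeries_ker_det :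
    (commutator (GL (Fin 2) R⟦X⟧)).relIndex (det : GL (Fin 2) R⟦X⟧ →* R⟦X⟧ˣ).ker =
      (commutator (GL (Fin 2) R)).relIndex (det : GL (Fin 2) R →* Rˣ).ker := by
  rw [commutator_powerSeries_eq_ker_det_inf_comap, inf_comm, inf_relIndex_right, relIndex_comap,
    map_constantCoeff_ker_det]

def mulVecPerm : GL n R →* Equiv.Perm (n → R) :=
  (MulAction.toPermHom _ _).comp (toLin : GL n R ≃* _).toMonoidHom

@[simp]
lemma mulVecPerm_apply (g : GL n R) (v : n → R) : mulVecPerm g v = g.val *ᵥ v := rfl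

end CommRing

section CardEqTwo

variable {F : Type*} [Field F] [Fintype F] {n : Type*} [Fintype n] [DecidableEq n]

lemma mulVecPerm_swap [DecidableEq F] (hF : Fintype.card F = 2) :
    mulVecPerm (swap F (0 : Fin 2) 1) = Equiv.swap ![1, 0] ![0, 1] := by
  ext v : 1
  obtain ⟨a, b, rfl⟩ : ∃ a b : F, v = ![a, b] := ⟨v 0, v 1, by ext i; fin_cases i <;> rfl⟩
  rcases FiniteField.eq_zero_or_eq_one_of_card_eq_two hF a with rfl | rfl <;>
    rcases FiniteField.eq_zero_or_eq_one_of_card_eq_two hF b with rfl | rfl <;>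
    simp [swap_mulVec, Equiv.swap_apply_def, ← List.ofFn_inj]

lemma ker_det_eq_top_of_card_eq_two (hF : Fintype.card F = 2) :
    (det : GL n F →* Fˣ).ker = ⊤ := by
  classical
  have : Subsingleton Fˣ := Fintype.card_le_one_iff_subsingleton.1 (by rw [Fintype.card_units, hF])
  exact eq_top_iff.2 fun g _ => MonoidHom.mem_ker.2 (Subsingleton.elim _ _)

lemma surjective_sign_comp_mulVecPerm [DecidableEq F] (hF : Fintype.card F = 2) :
    Function.Surjective (Equiv.Perm.sign.comp (mulVecPerm : GL (Fin 2) F →* _)) := by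
  intro u
  rcases Int.units_eq_one_or u with rfl | rfl
  · exact ⟨1, map_one _⟩
  · refine ⟨swap F 0 1, ?_⟩
    rw [MonoidHom.comp_apply, mulVecPerm_swap hF]
    exact Equiv.Perm.sign_swap (by simp)

theorem index_commutator_of_card_eq_two (hF : Fintype.card F = 2) :
    (commutator (GL (Fin 2) F)).index = 2 := by
  classical
  set σ : GL (Fin 2) F →* ℤˣ := Equiv.Perm.sign.comp mulVecPerm
  have hindex : σ.ker.index = 2 := by
    rw [index_ker, MonoidHom.range_eq_top.2 (surjective_sign_comp_mulVecPerm hF), card_top,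
      Nat.card_eq_fintype_card]
    rfl
  have hcard : Nat.card σ.ker = 3 := by
    have hG : Nat.card (GL (Fin 2) F) = 6 := by
      rw [card_GL_field, Fin.prod_univ_two, hF]
      rfl
    have := σ.ker.index_mul_card
    rw [hindex, hG] at this
    omega
  have hle : commutator (GL (Fin 2) F) ≤ σ.ker := Abelianization.commutator_subset_ker σ
  have hdvd : Nat.card (commutator (GL (Fin 2) F)) ∣ 3 := hcard ▸ card_dvd_of_le hle
  have heq : commutator (GL (Fin 2) F) = σ.ker := by
    refine eq_of_le_of_card_ge hle ?_
    rcases Nat.prime_three.eq_one_or_self_of_dvd _ hdvd with h | h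
    · exact absurd (card_eq_one.1 h) commutator_ne_bot
    · rw [h, hcard]
  rw [heq, hindex]

end CardEqTwo

end Matrix.GeneralLinearGroup

/-- For `R = F₂[[π]]`, the commutator subgroup of `GL(2,R)` consists of the determinant-one
matrices whose reduction mod `π` lies in the commutator subgroup of `GL(2,F₂)`;
in particular it has index `2` in `SL(2,R)`. -/
theorem stmt10 (F : Type*) [Field F] [Fintype F] (hF : Fintype.card F = 2) :
    commutator (GL (Fin 2) (PowerSeries F)) =
      (Matrix.GeneralLinearGroup.det :
          GL (Fin 2) (PowerSeries F) →* (PowerSeries F)ˣ).ker ⊓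
        Subgroup.comap
          (Matrix.GeneralLinearGroup.map (PowerSeries.constantCoeff (R := F)) :
            GL (Fin 2) (PowerSeries F) →* GL (Fin 2) F)
          (commutator (GL (Fin 2) F)) ∧
    (commutator (GL (Fin 2) (PowerSeries F))).relIndex
      (Matrix.GeneralLinearGroup.det :
        GL (Fin 2) (PowerSeries F) →* (PowerSeries F)ˣ).ker = 2 := by
  refine ⟨GeneralLinearGroup.commutator_powerSeries_eq_ker_det_inf_comap, ?_⟩
  rw [GeneralLinearGroup.relIndex_commutator_powerSeries_ker_det,
    GeneralLinearGroup.ker_det_eq_top_of_card_eq_two hF, relIndex_top_right,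
    GeneralLinearGroup.index_commutator_of_card_eq_two hF]
end

section
/- Let R = F[[π]] be the power series ring over a finite field F with |F| > 3. Then SL(2,R) equals its own commutator subgroup. -/
/-!
Conjugating the upper transvection with entry `b` by `diag(u, u⁻¹)` multiplies `b` by `u²`, so the
transvection with entry `b (u² - 1)` is a commutator, and likewise for lower transvections. If
`u² - 1` is a unit, every transvection is therefore a commutator. Over a local ring `SL₂` is
generated by transvections: a matrix whose lower-left entry is a unit is a product of three of
them, and otherwise its upper-left entry is a unit and one row operation makes the lower-left entry
a unit. In `F[[π]]` with `|F| > 3` one takes for `u` a constant `a ∈ F` with `a ≠ 0, ±1`.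
-/

open Matrix.SpecialLinearGroup
open scoped MatrixGroups commutatorElement

namespace Matrix.SpecialLinearGroup

variable {R : Type*} [CommRing R]

lemma transvection_zero_one_coe (b : R) :
    ((transvection zero_ne_one b : SL(2, R)) : Matrix (Fin 2) (Fin 2) R) = !![1, b; 0, 1] := by
  ext i j; fin_cases i <;> fin_cases j <;> simp [transvection_coe]

lemma transvection_one_zero_coe (b : R) :
    ((transvection one_ne_zero b : SL(2, R)) : Matrix (Fin 2) (Fin 2) R) = !![1, 0; b, 1] := by
  ext i j; fin_cases i <;> fin_cases j <;> simp [transvection_coe]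

def diagUnit (u : Rˣ) : SL(2, R) :=
  ⟨!![(u : R), 0; 0, ↑u⁻¹], by simp⟩

lemma diagUnit_coe (u : Rˣ) :
    ((diagUnit u : SL(2, R)) : Matrix (Fin 2) (Fin 2) R) = !![(u : R), 0; 0, ↑u⁻¹] := rfl

lemma diagUnit_inv (u : Rˣ) : (diagUnit u)⁻¹ = diagUnit u⁻¹ := by
  refine inv_eq_of_mul_eq_one_right (Subtype.ext ?_)
  simp [diagUnit_coe, Matrix.one_fin_two]

lemma commutatorElement_diagUnit_transvection_zero_one (u : Rˣ) (b : R) :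
    ⁅diagUnit u, (transvection zero_ne_one b : SL(2, R))⁆ =
      transvection zero_ne_one (b * ((u : R) ^ 2 - 1)) := by
  rw [commutatorElement_def, diagUnit_inv, transvection_inv]
  ext i j
  fin_cases i <;> fin_cases j <;> simp [coe_mul, diagUnit_coe, transvection_zero_one_coe]
  ring

lemma commutatorElement_diagUnit_inv_transvection_one_zero (u : Rˣ) (b : R) :
    ⁅diagUnit u⁻¹, (transvection one_ne_zero b : SL(2, R))⁆ =
      transvection one_ne_zero (b * ((u : R) ^ 2 - 1)) := by
  rw [commutatorElement_def, diagUnit_inv, transvection_inv]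
  ext i j
  fin_cases i <;> fin_cases j <;> simp [coe_mul, diagUnit_coe, transvection_one_zero_coe]
  ring

lemma transvection_mem_commutator_of_isUnit {u : Rˣ} (hu : IsUnit ((u : R) ^ 2 - 1))
    {i j : Fin 2} (hij : i ≠ j) (c : R) :
    transvection hij c ∈ commutator SL(2, R) := by
  obtain ⟨w, hw⟩ := hu
  have hc : c * ↑w⁻¹ * ((u : R) ^ 2 - 1) = c := by rw [← hw, mul_assoc, Units.inv_mul, mul_one]
  fin_cases i <;> fin_cases j
  · exact absurd rfl hij
  · rw [← hc, ← commutatorElement_diagUnit_transvection_zero_one]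
    exact Subgroup.commutator_mem_commutator (Subgroup.mem_top _) (Subgroup.mem_top _)
  · rw [← hc, ← commutatorElement_diagUnit_inv_transvection_one_zero]
    exact Subgroup.commutator_mem_commutator (Subgroup.mem_top _) (Subgroup.mem_top _)
  · exact absurd rfl hij

lemma eq_transvection_mul_transvection_mul_transvection (A : SL(2, R)) {c : R}
    (hc : A 1 0 * c = 1) :
    A = transvection zero_ne_one ((A 0 0 - 1) * c) * transvection one_ne_zero (A 1 0) *
      transvection zero_ne_one ((A 1 1 - 1) * c) := by
  have hdet : A 0 0 * A 1 1 - A 0 1 * A 1 0 = 1 := by rw [← det_fin_two]; exact A.2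
  ext i j
  fin_cases i <;> fin_cases j <;>
    simp [coe_mul, transvection_zero_one_coe, transvection_one_zero_coe]
  · linear_combination (1 - A 0 0) * hc
  · linear_combination (A 0 0 * c - A 0 0 * c * A 1 1 - c + c * A 1 1 - A 0 1) * hc - c * hdet
  · linear_combination (1 - A 1 1) * hc

lemma isUnit_apply_zero_zero_or_isUnit_apply_one_zero [IsLocalRing R] (A : SL(2, R)) :
    IsUnit (A 0 0) ∨ IsUnit (A 1 0) := by
  have hdet : A 0 0 * A 1 1 + -(A 0 1 * A 1 0) = 1 := by
    rw [← sub_eq_add_neg, ← det_fin_two]; exact A.2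
  refine (IsLocalRing.isUnit_or_isUnit_of_isUnit_add (hdet ▸ isUnit_one)).imp
    isUnit_of_mul_isUnit_left fun h ↦ isUnit_of_mul_isUnit_right (IsUnit.neg_iff _ |>.1 h)

theorem transvection_induction_of_isLocalRing [IsLocalRing R] (P : SL(2, R) → Prop)
    (htransvec : ∀ (i j : Fin 2) (h : i ≠ j) c, P (transvection h c))
    (hmul : ∀ A B, P A → P B → P (A * B)) (A : SL(2, R)) : P A := by
  have hcorner (B : SL(2, R)) (hB : IsUnit (B 1 0)) : P B := by
    obtain ⟨w, hw⟩ := hB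
    rw [eq_transvection_mul_transvection_mul_transvection B (c := ↑w⁻¹) (by simp [← hw])]
    exact hmul _ _ (hmul _ _ (htransvec _ _ _ _) (htransvec _ _ _ _)) (htransvec _ _ _ _)
  by_cases hc : IsUnit (A 1 0)
  · exact hcorner A hc
  have ha : IsUnit (A 0 0) := (isUnit_apply_zero_zero_or_isUnit_apply_one_zero A).resolve_right hc
  have hB : IsUnit ((transvection one_ne_zero 1 * A : SL(2, R)) 1 0) := by
    have : IsUnit ((A 0 0 + A 1 0) + -A 1 0) := by simpa using ha
    simpa [coe_mul, transvection_one_zero_coe, Matrix.mul_apply, add_comm, hc] using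
      IsLocalRing.isUnit_or_isUnit_of_isUnit_add this
  rw [show A = transvection one_ne_zero (-1) * (transvection one_ne_zero 1 * A) by
    rw [← mul_assoc, ← transvection_add, neg_add_cancel, transvection_coeff_zero, one_mul]]
  exact hmul _ _ (htransvec _ _ _ _) (hcorner _ hB)

theorem commutator_eq_top_of_isUnit_sq_sub_one [IsLocalRing R] {u : Rˣ}
    (hu : IsUnit ((u : R) ^ 2 - 1)) : commutator SL(2, R) = ⊤ :=
  (Subgroup.eq_top_iff' _).2 <| transvection_induction_of_isLocalRing (· ∈ commutator _)
    (fun _ _ h c ↦ transvection_mem_commutator_of_isUnit hu h c) (fun _ _ ↦ mul_mem)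

end Matrix.SpecialLinearGroup

lemma exists_ne_zero_and_sq_ne_one {F : Type*} [Field F] [Fintype F]
    (h : 3 < Fintype.card F) : ∃ a : F, a ≠ 0 ∧ a ^ 2 ≠ 1 := by
  classical
  obtain ⟨a, -, ha⟩ := Finset.exists_mem_notMem_of_card_lt_card
    (s := ({0, 1, -1} : Finset F)) (t := Finset.univ)
    (Finset.card_le_three.trans_lt (by simpa using h))
  simp only [Finset.mem_insert, Finset.mem_singleton, not_or] at ha
  exact ⟨a, ha.1, fun h ↦ (sq_eq_one_iff.1 h).elim ha.2.1 ha.2.2⟩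

/-- For `R = F[[π]]` with `F` finite, `|F| > 3`, the group `SL(2,R)` is its own
commutator subgroup. -/
theorem stmt11 (F : Type*) [Field F] [Fintype F] (h : 3 < Fintype.card F) :
    commutator (Matrix.SpecialLinearGroup (Fin 2) (PowerSeries F)) = ⊤ := by
  obtain ⟨a, ha0, ha1⟩ := exists_ne_zero_and_sq_ne_one h
  refine commutator_eq_top_of_isUnit_sq_sub_one
    (u := ((isUnit_iff_ne_zero.2 ha0).map (PowerSeries.C (R := F))).unit) ?_
  rw [IsUnit.unit_spec, ← map_pow, ← map_one PowerSeries.C, ← map_sub]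
  exact (isUnit_iff_ne_zero.2 (sub_ne_zero.2 ha1)).map _
end

section
/- Let S_1, ..., S_r be profinite groups, each perfect, with r > 1. If H is a closed subgroup of S_1 × ... × S_r such that the projection H → S_i × S_j is surjective for all i < j, then H = S_1 × ... × S_r. -/
/-!
Fix a coordinate `ℓ`. For a set `T` of other coordinates let `M_T ≤ S ℓ` consist of the
`ℓ`-coordinates of those elements of `H` that are trivial on `T`. The commutator of an element
trivial on `T` with one trivial on `T'` is trivial on `T ∪ T'`, so `⁅M_T, M_T'⁆ ≤ M_(T ∪ T')`.
Surjectivity onto pairs gives `M_{j} = S ℓ`, and since `S ℓ` is perfect this propagates to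
`M_T = S ℓ` for every finite `T` avoiding `ℓ`. With `T` the complement of `ℓ` this says that `H`
contains the factor `S ℓ`, and the factors generate the product.
-/
open scoped commutatorElement

section

variable {ι : Type*} {S : ι → Type*} [∀ i, Group (S i)]

def Subgroup.projTrivialOn (H : Subgroup (∀ i, S i)) (T : Set ι) (ℓ : ι) : Subgroup (S ℓ) :=
  (H ⊓ ⨅ j ∈ T, (Pi.evalMonoidHom S j).ker).map (Pi.evalMonoidHom S ℓ)

namespace Subgroup

variable {H : Subgroup (∀ i, S i)} {T T' : Set ι} {ℓ : ι}

theorem mem_projTrivialOn {s : S ℓ} :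
    s ∈ H.projTrivialOn T ℓ ↔ ∃ h ∈ H, (∀ j ∈ T, h j = 1) ∧ h ℓ = s := by
  simp [projTrivialOn, mem_iInf, and_assoc]

theorem commutator_projTrivialOn_le :
    ⁅H.projTrivialOn T ℓ, H.projTrivialOn T' ℓ⁆ ≤ H.projTrivialOn (T ∪ T') ℓ := by
  rw [commutator_le]
  rintro _ hs _ hs'
  obtain ⟨h, hH, hT, rfl⟩ := mem_projTrivialOn.mp hs
  obtain ⟨h', hH', hT', rfl⟩ := mem_projTrivialOn.mp hs'
  have hmem : ⁅h, h'⁆ ∈ H := by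
    simpa using commutator_le_sup H H (commutator_mem_commutator hH hH')
  refine mem_projTrivialOn.mpr ⟨⁅h, h'⁆, hmem, ?_, rfl⟩
  rintro j (hj | hj)
  · exact (congrArg (⁅·, h' j⁆) (hT j hj)).trans (commutatorElement_one_left _)
  · exact (congrArg (⁅h j, ·⁆) (hT' j hj)).trans (commutatorElement_one_right _)

theorem projTrivialOn_singleton_eq_top {j : ι} (hpair : ∀ s : S ℓ, ∃ h ∈ H, h j = 1 ∧ h ℓ = s) :
    H.projTrivialOn {j} ℓ = ⊤ :=
  eq_top_iff.mpr fun s _ ↦ mem_projTrivialOn.mpr <| by simpa using hpair s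

theorem projTrivialOn_eq_top (hperf : ∀ i, _root_.commutator (S i) = ⊤)
    (hpair : ∀ j ≠ ℓ, ∀ s : S ℓ, ∃ h ∈ H, h j = 1 ∧ h ℓ = s)
    {T : Finset ι} (hT : T.Nonempty) (hℓ : ℓ ∉ T) : H.projTrivialOn T ℓ = ⊤ := by
  induction hT using Finset.Nonempty.cons_induction with
  | singleton j =>
    rw [Finset.coe_singleton]
    exact projTrivialOn_singleton_eq_top (hpair j (Ne.symm (by simpa using hℓ)))
  | cons j T hj hT ih =>
    rw [Finset.mem_cons, not_or] at hℓ
    rw [Finset.coe_cons, Set.insert_eq, eq_top_iff]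
    calc ⊤ = ⁅H.projTrivialOn {j} ℓ, H.projTrivialOn T ℓ⁆ := by
          rw [projTrivialOn_singleton_eq_top (hpair j (Ne.symm hℓ.1)), ih hℓ.2,
            ← _root_.commutator_def, hperf]
      _ ≤ H.projTrivialOn ({j} ∪ T) ℓ := commutator_projTrivialOn_le

theorem mulSingle_mem_of_projTrivialOn_eq_top [DecidableEq ι] {s : S ℓ}
    (hM : H.projTrivialOn {ℓ}ᶜ ℓ = ⊤) : Pi.mulSingle ℓ s ∈ H := by
  obtain ⟨h, hH, hT, hs⟩ := mem_projTrivialOn.mp (hM ▸ mem_top s)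
  convert hH
  ext j
  obtain rfl | hj := eq_or_ne j ℓ
  · simp [hs]
  · simp [hT j hj, hj]

theorem eq_top_of_perfect_of_surjective_pairs [Fintype ι] [DecidableEq ι] [Nontrivial ι]
    (hperf : ∀ i, _root_.commutator (S i) = ⊤)
    (hsurj : ∀ i j : ι, i ≠ j → ∀ (x : S i) (y : S j), ∃ h ∈ H, h i = x ∧ h j = y) :
    H = ⊤ := by
  refine eq_top_iff.mpr fun x _ ↦ pi_mem_of_mulSingle_mem x fun ℓ ↦ ?_
  apply mulSingle_mem_of_projTrivialOn_eq_top
  rw [← Finset.coe_singleton, ← Finset.coe_compl]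
  refine projTrivialOn_eq_top hperf (fun j hj ↦ hsurj j ℓ hj 1) ?_ (by simp)
  obtain ⟨j, hj⟩ := exists_ne ℓ
  exact ⟨j, by simpa using hj⟩

end Subgroup

end

theorem stmt13_general (r : ℕ) (hr : 1 < r) (S : Fin r → Type*)
    [∀ i, Group (S i)]
    (hperf : ∀ i, commutator (S i) = ⊤)
    (H : Subgroup (∀ i, S i))
    (hsurj : ∀ i j : Fin r, i < j → ∀ (x : S i) (y : S j), ∃ h ∈ H, h i = x ∧ h j = y) :
    H = ⊤ := by
  have : Nontrivial (Fin r) := Fin.nontrivial_iff_two_le.mpr hr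
  refine H.eq_top_of_perfect_of_surjective_pairs hperf fun i j hij x y ↦ ?_
  rcases hij.lt_or_gt with hlt | hgt
  · exact hsurj i j hlt x y
  · obtain ⟨h, hH, hy, hx⟩ := hsurj j i hgt y x
    exact ⟨h, hH, hx, hy⟩

/-- Goursat-type lemma: a closed subgroup of a finite product of perfect profinite groups
surjecting onto each pair of factors is the whole product. -/
theorem stmt13 (r : ℕ) (hr : 1 < r) (S : Fin r → Type*)
    [∀ i, Group (S i)] [∀ i, TopologicalSpace (S i)] [∀ i, IsTopologicalGroup (S i)]
    [∀ i, CompactSpace (S i)] [∀ i, TotallyDisconnectedSpace (S i)] [∀ i, T2Space (S i)]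
    (hperf : ∀ i, commutator (S i) = ⊤)
    (H : Subgroup (∀ i, S i)) (hclosed : IsClosed (H : Set (∀ i, S i)))
    (hsurj : ∀ i j : Fin r, i < j → ∀ (x : S i) (y : S j), ∃ h ∈ H, h i = x ∧ h j = y) :
    H = ⊤ :=
  stmt13_general r hr S hperf H hsurj
end

section
/- Let K be a field of characteristic 2 and f(x) = x³ + bx + c a separable cubic in K[x] with roots r1, r2, r3 in a separable closure. Then the polynomial (x - (r1²r2 + r2²r3 + r3²r1))(x - (r2²r1 + r1²r3 + r3²r2)) equals x² - 3cx + (b³ + 9c²) = x² + cx + (b³ + c²) in K[x]. -/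
open Polynomial

/-- Quadratic resolvent of a separable cubic `x³ + bx + c` in characteristic 2:
`(x - (r₁²r₂ + r₂²r₃ + r₃²r₁))(x - (r₂²r₁ + r₁²r₃ + r₃²r₂)) = x² + cx + (b³ + c²)`. -/
theorem stmt16 (K L : Type*) [Field K] [Field L] [Algebra K L] [CharP K 2]
    (b c : K) (r1 r2 r3 : L)
    (h12 : r1 ≠ r2) (h13 : r1 ≠ r3) (h23 : r2 ≠ r3)
    (hroots : (X - C r1) * (X - C r2) * (X - C r3) =
      X ^ 3 + C (algebraMap K L b) * X + C (algebraMap K L c)) :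
    (X - C (r1 ^ 2 * r2 + r2 ^ 2 * r3 + r3 ^ 2 * r1)) *
        (X - C (r2 ^ 2 * r1 + r1 ^ 2 * r3 + r3 ^ 2 * r2)) =
      X ^ 2 + C (algebraMap K L c) * X +
        C ((algebraMap K L b) ^ 3 + (algebraMap K L c) ^ 2) := by
  haveI : CharP L 2 := charP_of_injective_algebraMap (algebraMap K L).injective 2
  set b' := algebraMap K L b with hb'
  set c' := algebraMap K L c with hc'
  have h2 : (2 : L) = 0 := by
    have := CharP.cast_eq_zero L 2
    push_cast at this
    exact this
  have key : X ^ 3 + C (-(r1 + r2 + r3)) * X ^ 2 + C (r1 * r2 + r1 * r3 + r2 * r3) * X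
      + C (-(r1 * r2 * r3)) = X ^ 3 + C b' * X + C c' := by
    rw [← hroots]
    simp only [map_neg, map_add, map_mul]
    ring
  have he1 : r1 + r2 + r3 = 0 := by
    have h := congrArg (fun p => coeff p 2) key
    simp only [coeff_add, coeff_C_mul, coeff_X_pow, coeff_X, coeff_C] at h
    norm_num at h
    linear_combination -h
  have he2 : r1 * r2 + r1 * r3 + r2 * r3 = b' := by
    have h := congrArg (fun p => coeff p 1) key
    simp only [coeff_add, coeff_C_mul, coeff_X_pow, coeff_X, coeff_C] at h
    norm_num at h
    linear_combination h
  have he3 : r1 * r2 * r3 = -c' := by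
    have h := congrArg (fun p => coeff p 0) key
    simp only [coeff_add, coeff_C_mul, coeff_X_pow, coeff_X, coeff_C] at h
    norm_num at h
    linear_combination -h
  have hsum : (r1 ^ 2 * r2 + r2 ^ 2 * r3 + r3 ^ 2 * r1)
      + (r2 ^ 2 * r1 + r1 ^ 2 * r3 + r3 ^ 2 * r2) = -c' := by
    linear_combination (r1 * r2 + r1 * r3 + r2 * r3) * he1 - 3 * he3 + 2 * c' * h2
  have hprod : (r1 ^ 2 * r2 + r2 ^ 2 * r3 + r3 ^ 2 * r1)
      * (r2 ^ 2 * r1 + r1 ^ 2 * r3 + r3 ^ 2 * r2) = b' ^ 3 + c' ^ 2 := by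
    linear_combination
      ((r1 + r2 + r3) ^ 2 * (r1 * r2 * r3)
        - 6 * (r1 * r2 + r1 * r3 + r2 * r3) * (r1 * r2 * r3)) * he1
      + ((r1 * r2 + r1 * r3 + r2 * r3) ^ 2 + (r1 * r2 + r1 * r3 + r2 * r3) * b' + b' ^ 2) * he2
      + (r1 * r2 * r3 - c') * he3 + 4 * (r1 * r2 * r3) ^ 2 * h2
  have Hs := congrArg C hsum
  have Hp := congrArg C hprod
  simp only [map_add, map_mul, map_neg, map_pow] at Hs Hp
  simp only [map_add, map_mul, map_pow]
  linear_combination (-X) * Hs + Hp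
end
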